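/- arXiv:1804.04204 — 2 statements merged into one kernel-verified Lean document; each statement's English description precedes it below -/
import Mathlib

section
/- For every t ≥ 1, every t×t minor of the (t+2)×t matrix A_t (whose j-th column has entries 1, -2, 1 in rows j, j+1, j+2 and zeros elsewhere) is nonzero. Equivalently, deleting any two rows of A_t yields an invertible t×t matrix. -/
/-- The `(t+2) × t` matrix whose `j`-th column has entries `1, -2, 1` in rows
`j, j+1, j+2` and zeros elsewhere. -/
def matA (t : ℕ) : Matrix (Fin (t + 2)) (Fin t) ℂ :=
  Matrix.of fun i j =>
    if (i : ℕ) = j then 1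
    else if (i : ℕ) = (j : ℕ) + 1 then -2
    else if (i : ℕ) = (j : ℕ) + 2 then 1
    else 0

lemma matA_decomp (t : ℕ) (i : Fin (t+2)) (j : Fin t) :
    matA t i j = (if (i:ℕ) = (j:ℕ) then (1:ℂ) else 0)
      + (if (i:ℕ) = (j:ℕ)+1 then (-2:ℂ) else 0)
      + (if (i:ℕ) = (j:ℕ)+2 then (1:ℂ) else 0) := by
  unfold matA
  rw [Matrix.of_apply]
  split_ifs <;> first | omega | norm_num

lemma colsum (t : ℕ) (j : Fin t) : ∑ i : Fin (t+2), matA t i j = 0 := by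
  simp only [matA_decomp]
  rw [Fin.sum_univ_eq_sum_range (fun k => (if k = (j:ℕ) then (1:ℂ) else 0)
      + (if k = (j:ℕ)+1 then (-2:ℂ) else 0) + (if k = (j:ℕ)+2 then (1:ℂ) else 0))]
  rw [Finset.sum_add_distrib, Finset.sum_add_distrib]
  rw [Finset.sum_ite_eq' (Finset.range (t+2)), Finset.sum_ite_eq' (Finset.range (t+2)),
      Finset.sum_ite_eq' (Finset.range (t+2))]
  have := j.isLt
  simp only [Finset.mem_range]
  rw [if_pos (by omega), if_pos (by omega), if_pos (by omega)]
  ring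

lemma colsumw (t : ℕ) (j : Fin t) :
    ∑ i : Fin (t+2), ((i:ℕ):ℂ) * matA t i j = 0 := by
  simp only [matA_decomp, mul_add, mul_ite, mul_zero, mul_one, mul_neg]
  rw [Fin.sum_univ_eq_sum_range (fun k => (if k = (j:ℕ) then ((k:ℂ)) else 0)
      + (if k = (j:ℕ)+1 then -((k:ℂ)*2) else 0) + (if k = (j:ℕ)+2 then ((k:ℂ)) else 0))]
  rw [Finset.sum_add_distrib, Finset.sum_add_distrib]
  rw [Finset.sum_ite_eq' (Finset.range (t+2)), Finset.sum_ite_eq' (Finset.range (t+2)),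
      Finset.sum_ite_eq' (Finset.range (t+2))]
  have := j.isLt
  simp only [Finset.mem_range]
  rw [if_pos (by omega), if_pos (by omega), if_pos (by omega)]
  push_cast
  ring

theorem stmt_4 (t : ℕ) (ht : 1 ≤ t) (r : Fin t → Fin (t + 2))
    (hr : Function.Injective r) :
    ((matA t).submatrix r id).det ≠ 0 := by
  intro hdet
  obtain ⟨v, hvne, hv⟩ := (Matrix.exists_mulVec_eq_zero_iff).mpr hdet
  set y : Fin (t+2) → ℂ := (matA t).mulVec v with hy_def
  have h1 : ∀ i : Fin t, y (r i) = 0 := by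
    intro i
    have := congrFun hv i
    simpa [Matrix.mulVec, dotProduct, Matrix.submatrix, hy_def] using this
  have h2 : ∑ i : Fin (t+2), y i = 0 := by
    simp only [hy_def, Matrix.mulVec, dotProduct]
    rw [Finset.sum_comm]
    apply Finset.sum_eq_zero
    intro j _
    rw [← Finset.sum_mul, colsum, zero_mul]
  have h3 : ∑ i : Fin (t+2), ((i:ℕ):ℂ) * y i = 0 := by
    simp only [hy_def, Matrix.mulVec, dotProduct, Finset.mul_sum]
    rw [Finset.sum_comm]
    apply Finset.sum_eq_zero
    intro j _
    have hc : ∀ i : Fin (t+2), ((i:ℕ):ℂ) * (matA t i j * v j) = (((i:ℕ):ℂ) * matA t i j) * v j := by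
      intro i; ring
    simp only [hc]
    rw [← Finset.sum_mul, colsumw, zero_mul]
  set S : Finset (Fin (t+2)) := Finset.univ.image r with hS_def
  have hScard : S.card = t := by
    rw [hS_def, Finset.card_image_of_injective _ hr, Finset.card_univ, Fintype.card_fin]
  have hyS : ∀ i ∈ S, y i = 0 := by
    intro i hi
    rw [hS_def, Finset.mem_image] at hi
    obtain ⟨k, _, rfl⟩ := hi
    exact h1 k
  have hcompl : Sᶜ.card = 2 := by
    rw [Finset.card_compl, hScard, Fintype.card_fin]
    omega
  obtain ⟨a, b, hab, hAB⟩ := Finset.card_eq_two.mp hcompl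
  have e1 : y a + y b = 0 := by
    have h := Finset.sum_add_sum_compl S y
    rw [h2, Finset.sum_eq_zero hyS, hAB, Finset.sum_pair hab] at h
    simpa using h
  have e2 : ((a:ℕ):ℂ) * y a + ((b:ℕ):ℂ) * y b = 0 := by
    have h := Finset.sum_add_sum_compl S (fun i => ((i:ℕ):ℂ) * y i)
    rw [h3, Finset.sum_eq_zero (fun i hi => by rw [hyS i hi, mul_zero]),
        hAB, Finset.sum_pair hab] at h
    simpa using h
  have hcast : ((a:ℕ):ℂ) ≠ ((b:ℕ):ℂ) := by
    intro hc
    exact hab (Fin.ext (Nat.cast_injective hc))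
  have hya : y a = 0 := by
    have : (((a:ℕ):ℂ) - ((b:ℕ):ℂ)) * y a = 0 := by linear_combination e2 - ((b:ℕ):ℂ) * e1
    rcases mul_eq_zero.mp this with h | h
    · exact absurd (sub_eq_zero.mp h) hcast
    · exact h
  have hyb : y b = 0 := by linear_combination e1 - hya
  have hy0 : ∀ i, y i = 0 := by
    intro i
    by_cases hi : i ∈ S
    · exact hyS i hi
    · have : i ∈ Sᶜ := Finset.mem_compl.mpr hi
      rw [hAB, Finset.mem_insert, Finset.mem_singleton] at this
      rcases this with rfl | rfl
      · exact hya
      · exact hyb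
  -- now v = 0 by strong induction
  have hv0 : ∀ n : ℕ, ∀ hn : n < t, v ⟨n, hn⟩ = 0 := by
    intro n
    induction n using Nat.strong_induction_on with
    | _ n IH =>
      intro hn
      have hjlt : n < t + 2 := by omega
      have h := hy0 ⟨n, hjlt⟩
      rw [hy_def] at h
      simp only [Matrix.mulVec, dotProduct] at h
      rw [Finset.sum_eq_single (⟨n, hn⟩ : Fin t)] at h
      · rw [matA_decomp] at h
        simp only [if_pos rfl] at h
        have hne1 : ¬ (n = n + 1) := by omega
        have hne2 : ¬ (n = n + 2) := by omega
        rw [if_neg hne1, if_neg hne2] at h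
        simpa using h
      · intro b _ hbj
        rw [matA_decomp]
        by_cases hc1 : n = (b:ℕ)
        · exact absurd (Fin.ext hc1.symm : b = ⟨n, hn⟩) hbj
        · rw [if_neg (by simpa using hc1)]
          by_cases hc2 : n = (b:ℕ) + 1
          · have hb0 : v b = 0 := IH b.1 (by omega) b.2
            rw [hb0, mul_zero]
          · rw [if_neg (by simpa using hc2)]
            by_cases hc3 : n = (b:ℕ) + 2
            · have hb0 : v b = 0 := IH b.1 (by omega) b.2
              rw [hb0, mul_zero]
            · rw [if_neg (by simpa using hc3)]
              simp
      · intro hj; exact absurd (Finset.mem_univ _) hj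
  exact hvne (funext fun j => by simpa using hv0 j.1 j.2)
end

section
/- For every t ≥ 1, any nonzero linear combination of the columns of the (t+2)×t matrix A_t has at least 3 nonzero entries. -/
lemma matA_split (t : ℕ) (j : Fin t) (i : Fin (t + 2)) :
    matA t i j = (if i = ⟨j, by omega⟩ then 1 else 0)
      + (if i = ⟨j + 1, by omega⟩ then (-2) else 0)
      + (if i = ⟨j + 2, by omega⟩ then 1 else 0) := by
  simp only [matA, Matrix.of_apply, Fin.ext_iff]
  split_ifs <;> (try omega) <;> norm_num

lemma col_sum (t : ℕ) (j : Fin t) : ∑ i : Fin (t + 2), matA t i j = 0 := by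
  simp [matA_split, Finset.sum_add_distrib, Finset.sum_ite_eq']
  norm_num

lemma col_wsum (t : ℕ) (j : Fin t) :
    ∑ i : Fin (t + 2), ((i : ℕ) : ℂ) * matA t i j = 0 := by
  simp only [matA_split, mul_add, mul_ite, mul_one, mul_zero, mul_neg,
    Finset.sum_add_distrib, Finset.sum_ite_eq', Finset.mem_univ, if_true]
  push_cast
  ring

open Classical in
theorem stmt_5 (t : ℕ) (ht : 1 ≤ t) (x : Fin t → ℂ) (hx : x ≠ 0) :
    3 ≤ (Finset.univ.filter fun i => (matA t).mulVec x i ≠ 0).card := by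
  set y := (matA t).mulVec x with hy
  set F := Finset.univ.filter fun i => y i ≠ 0 with hF
  have hyd : ∀ i, y i = ∑ j, matA t i j * x j := by
    intro i; rw [hy]; rfl
  have hsum : ∑ i, y i = 0 := by
    simp only [hyd]
    rw [Finset.sum_comm]
    simp [← Finset.sum_mul, col_sum]
  have hwsum : ∑ i : Fin (t+2), ((i : ℕ) : ℂ) * y i = 0 := by
    simp only [hyd, Finset.mul_sum]
    rw [Finset.sum_comm]
    have h0 : ∀ j : Fin t, ∑ i : Fin (t+2), ((i:ℕ):ℂ) * (matA t i j * x j) = 0 := by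
      intro j
      calc ∑ i : Fin (t+2), ((i:ℕ):ℂ) * (matA t i j * x j)
          = (∑ i : Fin (t+2), ((i:ℕ):ℂ) * matA t i j) * x j := by
            rw [Finset.sum_mul]; congr 1; ext i; ring
        _ = 0 := by rw [col_wsum]; ring
    simp [h0]
  have hsumF : ∑ i ∈ F, y i = 0 := by
    rw [hF, Finset.sum_filter_ne_zero]; exact hsum
  have hwsumF : ∑ i ∈ F, ((i : ℕ) : ℂ) * y i = 0 := by
    rw [← hwsum]
    apply Finset.sum_subset (Finset.subset_univ _)
    intro i _ hi
    simp only [hF, Finset.mem_filter, Finset.mem_univ, true_and, not_not] at hi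
    simp [hi]
  have hS : (Finset.univ.filter fun j => x j ≠ 0).Nonempty := by
    rcases Function.ne_iff.mp hx with ⟨j, hj⟩
    refine ⟨j, ?_⟩
    simp only [Finset.mem_filter, Finset.mem_univ, true_and]
    simpa using hj
  set m := (Finset.univ.filter fun j => x j ≠ 0).min' hS with hm
  have hxm : x m ≠ 0 := by
    have h := Finset.min'_mem _ hS
    rw [← hm] at h
    simp only [Finset.mem_filter] at h
    exact h.2
  have hxlt : ∀ j : Fin t, (j : ℕ) < (m : ℕ) → x j = 0 := by
    intro j hj
    by_contra h
    have : m ≤ j := Finset.min'_le _ j (by simp [h])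
    omega
  have hmt : (m : ℕ) < t + 2 := by omega
  have hne : F.Nonempty := by
    refine ⟨⟨(m : ℕ), hmt⟩, ?_⟩
    simp only [hF, Finset.mem_filter, Finset.mem_univ, true_and]
    rw [hyd, Finset.sum_eq_single m]
    · have h1 : matA t ⟨(m : ℕ), hmt⟩ m = 1 := by
        simp only [matA, Matrix.of_apply]
        simp
      rw [h1, one_mul]; exact hxm
    · intro j _ hjm
      rcases eq_or_ne ((m : ℕ)) (j : ℕ) with h1 | h1
      · exact absurd (Fin.ext h1.symm) hjm
      rcases eq_or_ne ((m : ℕ)) ((j : ℕ) + 1) with h2 | h2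
      · rw [hxlt j (by omega)]; ring
      rcases eq_or_ne ((m : ℕ)) ((j : ℕ) + 2) with h3 | h3
      · rw [hxlt j (by omega)]; ring
      · have h4 : matA t ⟨(m : ℕ), hmt⟩ j = 0 := by
          simp only [matA, Matrix.of_apply]
          rw [if_neg h1, if_neg h2, if_neg h3]
        rw [h4]; ring
    · intro h; exact absurd (Finset.mem_univ m) h
  by_contra hcard
  push_neg at hcard
  interval_cases h : F.card
  · rw [Finset.card_eq_zero] at h
    exact absurd h (Finset.nonempty_iff_ne_empty.mp hne)
  · obtain ⟨a, ha⟩ := Finset.card_eq_one.mp h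
    have hya : y a ≠ 0 := by
      have hm2 : a ∈ F := by simp [ha]
      simpa [hF] using hm2
    rw [ha, Finset.sum_singleton] at hsumF
    exact hya hsumF
  · obtain ⟨a, b, hab, hF2⟩ := Finset.card_eq_two.mp h
    have hya : y a ≠ 0 := by
      have hm2 : a ∈ F := by simp [hF2]
      simpa [hF] using hm2
    rw [hF2, Finset.sum_pair hab] at hsumF hwsumF
    have hab' : ((a : ℕ) : ℂ) ≠ ((b : ℕ) : ℂ) := by
      simp only [ne_eq, Nat.cast_inj]
      exact fun hc => hab (Fin.ext hc)
    have hz : (((a : ℕ) : ℂ) - ((b : ℕ) : ℂ)) * y a = 0 := by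
      have hb : y b = - y a := by linear_combination hsumF
      rw [hb] at hwsumF
      linear_combination hwsumF
    rcases mul_eq_zero.mp hz with h' | h'
    · exact hab' (by linear_combination h')
    · exact hya h'
end
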